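/- arXiv:1810.07116 — 2 statements merged into one kernel-verified Lean document; each statement's English description precedes it below -/
import Mathlib

section
/- The representation RMMaxF := MMCR ∪ MFCRMax exactly characterizes membership in MCR: for every pattern X ⊆ ℐ, X ∈ MCR if and only if there exist J ∈ RMMaxF and Z ∈ RMMaxF with J ⊆ X ⊆ Z. -/
open Finset

variable {τ ι : Type*} [DecidableEq ι]

/-- Conjunctive support: number of transactions containing the whole pattern. -/
def suppConj (T : Finset τ) (items : τ → Finset ι) (X : Finset ι) : ℕ :=
  (T.filter fun t => X ⊆ items t).card

/-- Disjunctive support: number of transactions containing at least one item of the pattern. -/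
def suppDisj (T : Finset τ) (items : τ → Finset ι) (X : Finset ι) : ℕ :=
  (T.filter fun t => (X ∩ items t).Nonempty).card

/-- The bond measure (division by zero in `ℚ` yields `0`, matching the convention). -/
def bond (T : Finset τ) (items : τ → Finset ι) (X : Finset ι) : ℚ :=
  (suppConj T items X : ℚ) / (suppDisj T items X : ℚ)

/-- Correlated patterns. -/
def MC (T : Finset τ) (items : τ → Finset ι) (I : Finset ι) (minbond : ℚ) :
    Set (Finset ι) :=
  {X | X ⊆ I ∧ minbond ≤ bond T items X}

/-- Correlated rare patterns. -/
def MCR (T : Finset τ) (items : τ → Finset ι) (I : Finset ι) (minsupp : ℕ) (minbond : ℚ) :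
    Set (Finset ι) :=
  {X | X ⊆ I ∧ minbond ≤ bond T items X ∧ suppConj T items X < minsupp}

/-- Closed correlated rare patterns. -/
def MFCR (T : Finset τ) (items : τ → Finset ι) (I : Finset ι) (minsupp : ℕ) (minbond : ℚ) :
    Set (Finset ι) :=
  {X | X ∈ MCR T items I minsupp minbond ∧
    ∀ Y : Finset ι, X ⊂ Y → Y ⊆ I → bond T items Y ≠ bond T items X}

/-- Minimal correlated rare patterns. -/
def MMCR (T : Finset τ) (items : τ → Finset ι) (I : Finset ι) (minsupp : ℕ) (minbond : ℚ) :
    Set (Finset ι) :=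
  {X | X ∈ MCR T items I minsupp minbond ∧
    ∀ Y : Finset ι, Y ⊂ X → bond T items Y ≠ bond T items X}

/-- Maximal correlated patterns: correlated with no strict correlated superset. -/
def MCMax (T : Finset τ) (items : τ → Finset ι) (I : Finset ι) (minbond : ℚ) :
    Set (Finset ι) :=
  {X | X ∈ MC T items I minbond ∧
    ∀ Y : Finset ι, X ⊂ Y → Y ⊆ I → Y ∉ MC T items I minbond}

/-- Maximal closed correlated rare patterns. -/
def MFCRMax (T : Finset τ) (items : τ → Finset ι) (I : Finset ι) (minsupp : ℕ) (minbond : ℚ) :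
    Set (Finset ι) :=
  MFCR T items I minsupp minbond ∩ MCMax T items I minbond

/-- The representation `RMMaxF = MMCR ∪ MFCRMax`. -/
def RMMaxF (T : Finset τ) (items : τ → Finset ι) (I : Finset ι) (minsupp : ℕ) (minbond : ℚ) :
    Set (Finset ι) :=
  MMCR T items I minsupp minbond ∪ MFCRMax T items I minsupp minbond


/-!
For `X ⊆ Y` with `Supp(∨X) > 0`, `Supp(∧Y) ≤ Supp(∧X)` and `Supp(∨X) ≤ Supp(∨Y)`, so
`bond Y ≤ bond X`. Hence `MCR` is order-convex, which gives the backward direction.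
Conversely, for `X ∈ MCR` a minimal `J` with `bond J = bond X` lies below `X`; since
`Supp(∧J) = bond · Supp(∨J) ≤ bond · Supp(∨X) = Supp(∧X)`, `J` is still rare, so `J ∈ MMCR`.
A maximal correlated `Z ⊇ X` is rare by antitonicity of `Supp(∧·)`, and closed because any
strict superset with the same bond would again be correlated.
-/

section

variable {T : Finset τ} {items : τ → Finset ι} {I : Finset ι} {minsupp : ℕ} {minbond : ℚ}
  {X Y : Finset ι}

lemma suppConj_anti (h : X ⊆ Y) : suppConj T items Y ≤ suppConj T items X :=
  card_le_card <| monotone_filter_right _ fun _ _ hY => h.trans hY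

lemma suppDisj_mono (h : X ⊆ Y) : suppDisj T items X ≤ suppDisj T items Y :=
  card_le_card <| monotone_filter_right _ fun _ _ hX => hX.mono (inter_subset_inter h subset_rfl)

lemma suppDisj_pos_of_bond_pos (h : 0 < bond T items X) : 0 < suppDisj T items X :=
  Nat.pos_of_ne_zero fun h0 => by simp [bond, h0] at h

lemma suppConj_eq_bond_mul (h : suppDisj T items X ≠ 0) :
    (suppConj T items X : ℚ) = bond T items X * suppDisj T items X :=
  (div_mul_cancel₀ _ (Nat.cast_ne_zero.2 h)).symm

lemma bond_anti (h : X ⊆ Y) (hX : 0 < suppDisj T items X) :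
    bond T items Y ≤ bond T items X :=
  div_le_div₀ (Nat.cast_nonneg _) (Nat.cast_le.2 (suppConj_anti h)) (Nat.cast_pos.2 hX)
    (Nat.cast_le.2 (suppDisj_mono h))

lemma suppConj_eq_of_bond_eq (h : Y ⊆ X) (hb : bond T items Y = bond T items X)
    (hpos : 0 < bond T items X) : suppConj T items Y = suppConj T items X := by
  refine le_antisymm ?_ (suppConj_anti h)
  have hdY := suppDisj_pos_of_bond_pos (hb ▸ hpos)
  have hdYX := suppDisj_mono (T := T) (items := items) h
  have : (suppConj T items Y : ℚ) ≤ suppConj T items X := by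
    rw [suppConj_eq_bond_mul hdY.ne', suppConj_eq_bond_mul (hdY.trans_le hdYX).ne', hb]
    exact mul_le_mul_of_nonneg_left (Nat.cast_le.2 hdYX) hpos.le
  exact_mod_cast this

lemma MCR_ordConnected (hb0 : 0 < minbond) : (MCR T items I minsupp minbond).OrdConnected := by
  refine ⟨fun J hJ Z hZ X ⟨hJX, hXZ⟩ => ⟨hXZ.trans hZ.1, ?_, ?_⟩⟩
  · have hdX := (suppDisj_pos_of_bond_pos (hb0.trans_le hJ.2.1)).trans_le (suppDisj_mono hJX)
    exact hZ.2.1.trans (bond_anti hXZ hdX)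
  · exact (suppConj_anti hJX).trans_lt hJ.2.2

lemma RMMaxF_subset_MCR : RMMaxF T items I minsupp minbond ⊆ MCR T items I minsupp minbond :=
  Set.union_subset (fun _ h => h.1) fun _ h => h.1.1

lemma exists_mem_MMCR_subset (hb0 : 0 < minbond) (hX : X ∈ MCR T items I minsupp minbond) :
    ∃ J ∈ MMCR T items I minsupp minbond, J ⊆ X := by
  obtain ⟨J, hJX, hJ⟩ :=
    exists_minimal_le_of_wellFoundedLT (fun Y => bond T items Y = bond T items X) X rfl
  have hJb : bond T items J = bond T items X := hJ.prop
  have hJr : suppConj T items J < minsupp :=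
    suppConj_eq_of_bond_eq hJX hJb (hb0.trans_le hX.2.1) ▸ hX.2.2
  exact ⟨J, ⟨⟨hJX.trans hX.1, hJb ▸ hX.2.1, hJr⟩,
    fun _ hYJ hYb => hJ.not_lt (hYb.trans hJb) hYJ⟩, hJX⟩

lemma MC_finite : (MC T items I minbond).Finite :=
  I.powerset.finite_toSet.subset fun _ h => mem_powerset.2 h.1

lemma mem_MCMax_of_maximal (h : Maximal (· ∈ MC T items I minbond) X) :
    X ∈ MCMax T items I minbond :=
  ⟨h.prop, fun _ hXY _ hY => h.not_gt hY hXY⟩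

lemma mem_MFCR_of_mem_MCMax (hX : X ∈ MCMax T items I minbond)
    (hr : suppConj T items X < minsupp) : X ∈ MFCR T items I minsupp minbond :=
  ⟨⟨hX.1.1, hX.1.2, hr⟩, fun Y hXY hYI hb => hX.2 Y hXY hYI ⟨hYI, hb ▸ hX.1.2⟩⟩

lemma exists_mem_MFCRMax_superset (hX : X ∈ MCR T items I minsupp minbond) :
    ∃ Z ∈ MFCRMax T items I minsupp minbond, X ⊆ Z := by
  have hXMC : X ∈ MC T items I minbond := ⟨hX.1, hX.2.1⟩
  obtain ⟨Z, hXZ, hZ⟩ := MC_finite.exists_le_maximal hXMC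
  have hZ' := mem_MCMax_of_maximal hZ
  exact ⟨Z, ⟨mem_MFCR_of_mem_MCMax hZ' ((suppConj_anti hXZ).trans_lt hX.2.2), hZ'⟩, hXZ⟩

end

theorem stmt10_general (T : Finset τ) (items : τ → Finset ι) (I : Finset ι)
    (minsupp : ℕ) (minbond : ℚ)
    (hb0 : 0 < minbond)
    (X : Finset ι) :
    X ∈ MCR T items I minsupp minbond ↔
      ∃ J ∈ RMMaxF T items I minsupp minbond, ∃ Z ∈ RMMaxF T items I minsupp minbond,
        J ⊆ X ∧ X ⊆ Z := by
  constructor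
  · intro hX
    obtain ⟨J, hJ, hJX⟩ := exists_mem_MMCR_subset hb0 hX
    obtain ⟨Z, hZ, hXZ⟩ := exists_mem_MFCRMax_superset hX
    exact ⟨J, Or.inl hJ, Z, Or.inr hZ, hJX, hXZ⟩
  · rintro ⟨J, hJ, Z, hZ, hJX, hXZ⟩
    exact (MCR_ordConnected hb0).out (RMMaxF_subset_MCR hJ) (RMMaxF_subset_MCR hZ) ⟨hJX, hXZ⟩

theorem stmt10 (T : Finset τ) (items : τ → Finset ι) (I : Finset ι)
    (hitems : ∀ t ∈ T, items t ⊆ I)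
    (minsupp : ℕ) (minbond : ℚ)
    (hs : 1 ≤ minsupp) (hb0 : 0 < minbond) (hb1 : minbond ≤ 1)
    (X : Finset ι) (hXI : X ⊆ I) :
    X ∈ MCR T items I minsupp minbond ↔
      ∃ J ∈ RMMaxF T items I minsupp minbond, ∃ Z ∈ RMMaxF T items I minsupp minbond,
        J ⊆ X ∧ X ⊆ Z :=
  stmt10_general T items I minsupp minbond hb0 X
end

section
/- Assume 1 ≤ minsupp ≤ |𝒯|. The representation RMinMF := MFCR ∪ MMCRMin exactly characterizes membership in MCR: for every pattern X ⊆ ℐ, X ∈ MCR if and only if there exist J ∈ RMinMF and Z ∈ RMinMF with J ⊆ X ⊆ Z. -/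
/-!
Support is antitone and disjunctive support monotone, so the bond is antitone on nonempty
patterns, and `MCR` is convex: a pattern squeezed between two correlated rare patterns is one
itself. Conversely, below a correlated rare `X` sits a minimal rare pattern `J ⊆ X`; it is
nonempty because `∅` is supported by every transaction, so it inherits correlation from `X`,
and its proper subsets have strictly larger support, hence strictly larger bond. Above `X` sits
a maximal `Z ⊆ I` with the bond of `X`, which is closed by construction.
-/

open Finset

variable {τ ι : Type*} [DecidableEq ι]

/-- Rare patterns. -/
def MR (T : Finset τ) (items : τ → Finset ι) (I : Finset ι) (minsupp : ℕ) :
    Set (Finset ι) :=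
  {X | X ⊆ I ∧ suppConj T items X < minsupp}

/-- Minimal rare patterns: rare patterns no strict subset of which is rare. -/
def MRMin (T : Finset τ) (items : τ → Finset ι) (I : Finset ι) (minsupp : ℕ) :
    Set (Finset ι) :=
  {X | X ∈ MR T items I minsupp ∧ ∀ Y : Finset ι, Y ⊂ X → Y ∉ MR T items I minsupp}

/-- The minimal elements of `MMCR`. -/
def MMCRMin (T : Finset τ) (items : τ → Finset ι) (I : Finset ι) (minsupp : ℕ) (minbond : ℚ) :
    Set (Finset ι) :=
  MMCR T items I minsupp minbond ∩ MRMin T items I minsupp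

/-- The representation `RMinMF = MFCR ∪ MMCRMin`. -/
def RMinMF (T : Finset τ) (items : τ → Finset ι) (I : Finset ι) (minsupp : ℕ) (minbond : ℚ) :
    Set (Finset ι) :=
  MFCR T items I minsupp minbond ∪ MMCRMin T items I minsupp minbond

section Bond

variable {T : Finset τ} {items : τ → Finset ι} {X Y : Finset ι}

lemma suppConj_anti_s12 : Antitone (suppConj T items) := fun _ _ hXY =>
  card_le_card <| monotone_filter_right _ fun _ _ hY => hXY.trans hY

lemma suppDisj_mono_s12 : Monotone (suppDisj T items) := fun _ _ hXY =>
  card_le_card <| monotone_filter_right _ fun _ _ hX => hX.mono (inter_subset_inter_right hXY)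

lemma suppConj_empty : suppConj T items ∅ = T.card := by
  simp [suppConj]

lemma suppConj_le_suppDisj (hX : X.Nonempty) : suppConj T items X ≤ suppDisj T items X :=
  card_le_card <| monotone_filter_right _ fun _ _ hXt => by rwa [inter_eq_left.2 hXt]

lemma bond_empty : bond T items ∅ = 0 := by
  simp [bond, suppDisj]

lemma bond_nonneg : 0 ≤ bond T items X := by
  unfold bond; positivity

lemma nonempty_of_bond_pos (h : 0 < bond T items X) : X.Nonempty := by
  rw [nonempty_iff_ne_empty]
  rintro rfl
  exact h.ne' bond_empty

lemma bond_le_bond_of_subset (hYX : Y ⊆ X) (hY : Y.Nonempty) :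
    bond T items X ≤ bond T items Y := by
  have hconj : suppConj T items X ≤ suppConj T items Y := suppConj_anti_s12 hYX
  rcases (suppDisj T items Y).eq_zero_or_pos with hdY | hdY
  · have hX : suppConj T items X = 0 :=
      Nat.eq_zero_of_le_zero <| hconj.trans <| (suppConj_le_suppDisj hY).trans_eq hdY
    rw [bond, hX, Nat.cast_zero, zero_div]
    exact bond_nonneg
  · exact div_le_div₀ (by positivity) (by exact_mod_cast hconj) (by exact_mod_cast hdY)
      (by exact_mod_cast suppDisj_mono_s12 hYX)

lemma bond_lt_bond_of_suppConj_lt (hYX : Y ⊆ X) (hY : Y.Nonempty)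
    (hconj : suppConj T items X < suppConj T items Y) :
    bond T items X < bond T items Y := by
  have hdY : 0 < suppDisj T items Y := (Nat.zero_lt_of_lt hconj).trans_le (suppConj_le_suppDisj hY)
  exact div_lt_div₀ (by exact_mod_cast hconj) (by exact_mod_cast suppDisj_mono_s12 hYX)
    (by positivity) (by exact_mod_cast hdY)

end Bond

section Patterns

variable {T : Finset τ} {items : τ → Finset ι} {I : Finset ι} {minsupp : ℕ} {minbond : ℚ}
  {X J Z : Finset ι}

lemma mem_MCR_of_mem_RMinMF (h : X ∈ RMinMF T items I minsupp minbond) :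
    X ∈ MCR T items I minsupp minbond :=
  h.elim (·.1) (·.1.1)

lemma mem_MCR_of_subset_of_subset (hb0 : 0 < minbond) (hJ : J ∈ MCR T items I minsupp minbond)
    (hZ : Z ∈ MCR T items I minsupp minbond) (hJX : J ⊆ X) (hXZ : X ⊆ Z) :
    X ∈ MCR T items I minsupp minbond := by
  have hX : X.Nonempty := (nonempty_of_bond_pos (hb0.trans_le hJ.2.1)).mono hJX
  exact ⟨hXZ.trans hZ.1, hZ.2.1.trans (bond_le_bond_of_subset hXZ hX),
    (suppConj_anti_s12 hJX).trans_lt hJ.2.2⟩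

lemma mem_MMCR_of_mem_MRMin (hb0 : 0 < minbond) (hX : X ∈ MCR T items I minsupp minbond)
    (hmin : X ∈ MRMin T items I minsupp) : X ∈ MMCR T items I minsupp minbond := by
  refine ⟨hX, fun Y hYX => ?_⟩
  rcases Y.eq_empty_or_nonempty with rfl | hY
  · rw [bond_empty]
    exact (hb0.trans_le hX.2.1).ne
  · have hYsupp : minsupp ≤ suppConj T items Y := by
      by_contra! hlt
      exact hmin.2 Y hYX ⟨hYX.subset.trans hX.1, hlt⟩
    exact (bond_lt_bond_of_suppConj_lt hYX.subset hY (hX.2.2.trans_le hYsupp)).ne'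

lemma exists_mem_MMCRMin_subset (hb0 : 0 < minbond) (hs : minsupp ≤ T.card)
    (hX : X ∈ MCR T items I minsupp minbond) :
    ∃ J ∈ MMCRMin T items I minsupp minbond, J ⊆ X := by
  obtain ⟨J, hJX, hJ⟩ :=
    exists_minimal_le_of_wellFoundedLT (· ∈ MR T items I minsupp) X ⟨hX.1, hX.2.2⟩
  have hJne : J.Nonempty := by
    rw [nonempty_iff_ne_empty]
    rintro rfl
    exact (hJ.prop.2.trans_le hs).ne suppConj_empty
  have hJMCR : J ∈ MCR T items I minsupp minbond :=
    ⟨hJ.prop.1, hX.2.1.trans (bond_le_bond_of_subset hJX hJne), hJ.prop.2⟩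
  have hJMin : J ∈ MRMin T items I minsupp := ⟨hJ.prop, fun _ hYJ => hJ.not_prop_of_lt hYJ⟩
  exact ⟨J, ⟨mem_MMCR_of_mem_MRMin hb0 hJMCR hJMin, hJMin⟩, hJX⟩

lemma exists_mem_MFCR_superset (hX : X ∈ MCR T items I minsupp minbond) :
    ∃ Z ∈ MFCR T items I minsupp minbond, X ⊆ Z := by
  let S : Set (Finset ι) := {Y | Y ⊆ I ∧ bond T items Y = bond T items X}
  have hS : S.Finite := I.powerset.finite_toSet.subset fun Y hY => mem_powerset.2 hY.1
  obtain ⟨Z, hXZ, hZ⟩ := hS.exists_le_maximal (a := X) ⟨hX.1, rfl⟩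
  have hZMCR : Z ∈ MCR T items I minsupp minbond :=
    ⟨hZ.prop.1, hZ.prop.2 ▸ hX.2.1, (suppConj_anti_s12 hXZ).trans_lt hX.2.2⟩
  have hZclosed : ∀ Y, Z ⊂ Y → Y ⊆ I → bond T items Y ≠ bond T items Z :=
    fun Y hZY hYI hbond => hZ.not_prop_of_gt hZY ⟨hYI, hbond.trans hZ.prop.2⟩
  exact ⟨Z, ⟨hZMCR, hZclosed⟩, hXZ⟩

end Patterns

theorem stmt12_general (T : Finset τ) (items : τ → Finset ι) (I : Finset ι)
    (minsupp : ℕ) (minbond : ℚ)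
    (hs2 : minsupp ≤ T.card)
    (hb0 : 0 < minbond)
    (X : Finset ι) :
    X ∈ MCR T items I minsupp minbond ↔
      ∃ J ∈ RMinMF T items I minsupp minbond, ∃ Z ∈ RMinMF T items I minsupp minbond,
        J ⊆ X ∧ X ⊆ Z := by
  constructor
  · intro hX
    obtain ⟨J, hJ, hJX⟩ := exists_mem_MMCRMin_subset hb0 hs2 hX
    obtain ⟨Z, hZ, hXZ⟩ := exists_mem_MFCR_superset hX
    exact ⟨J, Or.inr hJ, Z, Or.inl hZ, hJX, hXZ⟩
  · rintro ⟨J, hJ, Z, hZ, hJX, hXZ⟩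
    exact mem_MCR_of_subset_of_subset hb0 (mem_MCR_of_mem_RMinMF hJ)
      (mem_MCR_of_mem_RMinMF hZ) hJX hXZ

theorem stmt12 (T : Finset τ) (items : τ → Finset ι) (I : Finset ι)
    (hitems : ∀ t ∈ T, items t ⊆ I)
    (minsupp : ℕ) (minbond : ℚ)
    (hs1 : 1 ≤ minsupp) (hs2 : minsupp ≤ T.card)
    (hb0 : 0 < minbond) (hb1 : minbond ≤ 1)
    (X : Finset ι) (hXI : X ⊆ I) :
    X ∈ MCR T items I minsupp minbond ↔
      ∃ J ∈ RMinMF T items I minsupp minbond, ∃ Z ∈ RMinMF T items I minsupp minbond,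
        J ⊆ X ∧ X ⊆ Z :=
  stmt12_general T items I minsupp minbond hs2 hb0 X
end
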